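/- arXiv:1703.08304 — 6 statements merged into one kernel-verified Lean document; each statement's English description precedes it below -/
import Mathlib

section
/- Let C be a strongly connected category (every hom-set is nonempty) with pairwise coproducts, and let F : C → Ab be a functor to abelian groups. Then for any object c of C, the limit of F is isomorphic to the kernel of the map F(i₁) − F(i₂) : F(c) → F(c ⊔ c), where i₁, i₂ : c → c ⊔ c are the two coproduct inclusions. -/
open CategoryTheory CategoryTheory.Limits

/-!
A morphism `e` into `F c` that equalizes `F i₁` and `F i₂` equalizes every parallel pair
`f₁ f₂ : c ⟶ d`, since `fₖ = iₖ ≫ [f₁, f₂]`. So postcomposing `e` with `F f` for any choice of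
`f : c ⟶ d` (one exists by strong connectedness) gives a cone over `F`, independent of the
choices, and an equalizer of `F i₁`, `F i₂` becomes a limit of `F`. In a preadditive
category that equalizer is the kernel of `F i₁ - F i₂`.
-/

namespace CategoryTheory.Limits

variable {C : Type*} [Category C] [HasBinaryCoproducts C] {D : Type*} [Category D]
  {F : C ⥤ D} {c : C}

theorem comp_map_eq_of_comp_map_coprod_inl_eq {X : D} {e : X ⟶ F.obj c}
    (he : e ≫ F.map (coprod.inl : c ⟶ c ⨿ c) = e ≫ F.map coprod.inr) {d : C} (f₁ f₂ : c ⟶ d) :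
    e ≫ F.map f₁ = e ≫ F.map f₂ := by
  have h := he =≫ F.map (coprod.desc f₁ f₂)
  simpa only [Category.assoc, ← F.map_comp, coprod.inl_desc, coprod.inr_desc] using h

variable (hc : ∀ d : C, Nonempty (c ⟶ d))
include hc

noncomputable def coneOfForkCoprodInlInr
    (s : Fork (F.map (coprod.inl : c ⟶ c ⨿ c)) (F.map coprod.inr)) : Cone F where
  pt := s.pt
  π :=
    { app := fun d => s.ι ≫ F.map (hc d).some
      naturality := fun d d' φ => by
        simp only [Functor.const_obj_obj, Functor.const_obj_map, Category.id_comp,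
          Category.assoc, ← F.map_comp]
        exact comp_map_eq_of_comp_map_coprod_inl_eq s.condition _ _ }

theorem coneOfForkCoprodInlInr_π_app_self
    (s : Fork (F.map (coprod.inl : c ⟶ c ⨿ c)) (F.map coprod.inr)) :
    (coneOfForkCoprodInlInr hc s).π.app c = s.ι := by
  change s.ι ≫ F.map (hc c).some = s.ι
  rw [comp_map_eq_of_comp_map_coprod_inl_eq s.condition _ (𝟙 c), F.map_id, Category.comp_id]

noncomputable def isLimitConeOfForkCoprodInlInr
    {s : Fork (F.map (coprod.inl : c ⟶ c ⨿ c)) (F.map coprod.inr)} (hs : IsLimit s) :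
    IsLimit (coneOfForkCoprodInlInr hc s) where
  lift t := hs.lift (Fork.ofι (t.π.app c) (by rw [t.w, t.w]))
  fac t d := by
    change _ ≫ s.ι ≫ _ = _
    rw [← Category.assoc, Fork.IsLimit.lift_ι, Fork.ι_ofι, t.w]
  uniq t m hm := Fork.IsLimit.hom_ext hs <| by
    rw [Fork.IsLimit.lift_ι, Fork.ι_ofι, ← hm c, coneOfForkCoprodInlInr_π_app_self]
    rfl

end CategoryTheory.Limits

/-- For a strongly connected category `C` with pairwise (binary) coproducts and a
functor `F : C ⥤ Ab`, for any object `c`, the limit of `F` is isomorphic to the kernel of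
`F(i₁) - F(i₂) : F(c) ⟶ F(c ⊔ c)`, where `i₁, i₂` are the coproduct inclusions. -/
theorem limit_iso_kernel_of_stronglyConnected
    (C : Type) [SmallCategory C]
    (hconn : ∀ c c' : C, Nonempty (c ⟶ c'))
    [HasBinaryCoproducts C]
    (F : C ⥤ AddCommGrpCat) (c : C) :
    Nonempty (limit F ≅ kernel (F.map (coprod.inl : c ⟶ c ⨿ c) - F.map (coprod.inr : c ⟶ c ⨿ c))) :=
  ⟨(limit.isLimit F).conePointUniqueUpToIso
    (isLimitConeOfForkCoprodInlInr (hconn c)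
      (Preadditive.isLimitForkOfKernelFork (kernelIsKernel _)))⟩
end

section
/- Let C be a strongly connected category with pairwise coproducts and F : C → Ab a functor. Then the kernel of the natural map T : F(c) ⊕ F(c) → F(c ⊔ c) (induced by the two coproduct inclusions) equals {(x, −x) : x ∈ lim F}, where lim F is identified with the subgroup of invariant elements of F(c). -/
/-!
Applying `F` to the maps `coprod.desc f₁ f₂ : c ⨿ c ⟶ c'` shows that
`(x, y)` lies in the kernel of `T` iff `F f₁ x + F f₂ y = 0` for every parallel pair `f₁, f₂`.
The pair `(𝟙, 𝟙)` gives `y = -x`, and then the condition says exactly that `x` is invariant.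
-/

open CategoryTheory CategoryTheory.Limits

namespace CategoryTheory.Functor

variable {C : Type*} [Category C] (F : C ⥤ AddCommGrpCat) {c : C}

section

variable [HasBinaryCoproduct c c]

theorem map_coprodDesc_map_inl_add_map_inr {c' : C} (f₁ f₂ : c ⟶ c') (x y : F.obj c) :
    F.map (coprod.desc f₁ f₂) (F.map coprod.inl x + F.map coprod.inr y) =
      F.map f₁ x + F.map f₂ y := by
  rw [_root_.map_add, ← ConcreteCategory.comp_apply, ← ConcreteCategory.comp_apply, ← F.map_comp,
    ← F.map_comp, coprod.inl_desc, coprod.inr_desc]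

theorem map_inl_add_map_inr_eq_zero_iff (x y : F.obj c) :
    F.map coprod.inl x + F.map coprod.inr y = 0 ↔
      ∀ (c' : C) (f₁ f₂ : c ⟶ c'), F.map f₁ x + F.map f₂ y = 0 := by
  refine ⟨fun h c' f₁ f₂ => ?_, fun h => h _ _ _⟩
  rw [← F.map_coprodDesc_map_inl_add_map_inr, h, _root_.map_zero]

end

variable {F}

theorem forall_map_add_map_eq_zero_iff (x y : F.obj c) :
    (∀ (c' : C) (f₁ f₂ : c ⟶ c'), F.map f₁ x + F.map f₂ y = 0) ↔
      y = -x ∧ ∀ (c' : C) (f₁ f₂ : c ⟶ c'), F.map f₁ x = F.map f₂ x := by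
  constructor
  · intro h
    have hy : y = -x := eq_neg_of_add_eq_zero_right (by simpa using h c (𝟙 c) (𝟙 c))
    refine ⟨hy, fun c' f₁ f₂ => ?_⟩
    simpa [hy, add_neg_eq_zero] using h c' f₁ f₂
  · rintro ⟨rfl, hinv⟩ c' f₁ f₂
    rw [_root_.map_neg, hinv c' f₁ f₂, add_neg_cancel]

end CategoryTheory.Functor

theorem ker_T_eq_antidiagonal_of_limit_general
    (C : Type) [SmallCategory C]
    [HasBinaryCoproducts C]
    (F : C ⥤ AddCommGrpCat) (c : C) :
    ∀ p : F.obj c × F.obj c,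
      (F.map (coprod.inl : c ⟶ c ⨿ c) p.1 + F.map (coprod.inr : c ⟶ c ⨿ c) p.2 = 0) ↔
        (p.2 = -p.1 ∧ ∀ (c' : C) (f₁ f₂ : c ⟶ c'), F.map f₁ p.1 = F.map f₂ p.1) := fun p =>
  (F.map_inl_add_map_inr_eq_zero_iff p.1 p.2).trans
    (Functor.forall_map_add_map_eq_zero_iff p.1 p.2)

/-- For a strongly connected category `C` with pairwise coproducts and
`F : C ⥤ Ab`, the kernel of `T : F(c) ⊕ F(c) → F(c ⊔ c)`, `T(x,y) = F(i₁)(x) + F(i₂)(y)`,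
is exactly `{(x, -x) : x ∈ lim F}`, where `lim F` is identified with the subgroup of
invariant elements `{x ∈ F(c) : F(f₁)(x) = F(f₂)(x) for all parallel pairs f₁ f₂}`. -/
theorem ker_T_eq_antidiagonal_of_limit
    (C : Type) [SmallCategory C]
    (hconn : ∀ c c' : C, Nonempty (c ⟶ c'))
    [HasBinaryCoproducts C]
    (F : C ⥤ AddCommGrpCat) (c : C) :
    ∀ p : F.obj c × F.obj c,
      (F.map (coprod.inl : c ⟶ c ⨿ c) p.1 + F.map (coprod.inr : c ⟶ c ⨿ c) p.2 = 0) ↔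
        (p.2 = -p.1 ∧ ∀ (c' : C) (f₁ f₂ : c ⟶ c'), F.map f₁ p.1 = F.map f₂ p.1) :=
  ker_T_eq_antidiagonal_of_limit_general C F c
end

section
/- Let C be a strongly connected category with pairwise coproducts and F : C → Ab a functor. Then F is monoadditive (i.e., the map T : F(c₁) ⊕ F(c₂) → F(c₁ ⊔ c₂) is injective for all pairs of objects c₁, c₂) if and only if lim F = 0. -/
/-!
An element `(a₁, a₂)` of the kernel of `coprodSum F c₁ c₂` satisfies `F f a₁ = -F g a₂` for all
`f : c₁ ⟶ d` and `g : c₂ ⟶ d` (apply `F` to `coprod.desc f g`), so `F f a₁` does not depend on `f`.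
In a strongly connected category these images form a compatible family, i.e. an element of `lim F`,
which is zero when `lim F = 0`; hence `a₁ = 0`, and then `a₂ = 0`.
Conversely, each component `x_c` of an element `x` of `lim F` satisfies
`coprodSum F c c (x_c, 0) = x_{c ⨿ c} = coprodSum F c c (0, x_c)`, so injectivity forces `x_c = 0`.
-/

open CategoryTheory CategoryTheory.Limits

namespace CategoryTheory.Functor

section Coprod

variable {C : Type*} [Category C] (F : C ⥤ AddCommGrpCat) (c₁ c₂ : C) [HasBinaryCoproduct c₁ c₂]

noncomputable def coprodSum : F.obj c₁ × F.obj c₂ →+ F.obj (c₁ ⨿ c₂) :=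
  (F.map coprod.inl).hom.coprod (F.map coprod.inr).hom

variable {F c₁ c₂}

@[simp]
theorem coprodSum_apply (p : F.obj c₁ × F.obj c₂) :
    coprodSum F c₁ c₂ p = F.map coprod.inl p.1 + F.map coprod.inr p.2 :=
  rfl

theorem map_eq_neg_map_of_coprodSum_eq_zero {a₁ : F.obj c₁} {a₂ : F.obj c₂}
    (h : coprodSum F c₁ c₂ (a₁, a₂) = 0) {d : C} (f : c₁ ⟶ d) (g : c₂ ⟶ d) :
    F.map f a₁ = -F.map g a₂ := by
  rw [coprodSum_apply] at h
  have h' := congrArg (F.map (coprod.desc f g)) h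
  rw [_root_.map_add, _root_.map_zero, ← ConcreteCategory.comp_apply, ← F.map_comp,
    coprod.inl_desc, ← ConcreteCategory.comp_apply, ← F.map_comp, coprod.inr_desc] at h'
  exact eq_neg_of_add_eq_zero_left h'

theorem map_eq_map_of_coprodSum_eq_zero {a₁ : F.obj c₁} {a₂ : F.obj c₂}
    (h : coprodSum F c₁ c₂ (a₁, a₂) = 0) {d : C} (g : c₂ ⟶ d) (f f' : c₁ ⟶ d) :
    F.map f a₁ = F.map f' a₁ := by
  rw [map_eq_neg_map_of_coprodSum_eq_zero h f g, map_eq_neg_map_of_coprodSum_eq_zero h f' g]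

end Coprod

section Limit

variable {C : Type} [SmallCategory C] {F : C ⥤ AddCommGrpCat}

theorem limit_π_eq_zero_of_injective_coprodSum {c : C} [HasBinaryCoproduct c c]
    (hT : Function.Injective (coprodSum F c c)) (x : (limit F : AddCommGrpCat)) :
    limit.π F c x = 0 := by
  have hinl : F.map coprod.inl (limit.π F c x) = limit.π F (c ⨿ c) x := by
    rw [← ConcreteCategory.comp_apply, limit.w]
  have hinr : F.map coprod.inr (limit.π F c x) = limit.π F (c ⨿ c) x := by
    rw [← ConcreteCategory.comp_apply, limit.w]
  have h : (limit.π F c x, 0) = (0, limit.π F c x) :=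
    hT (by simp only [coprodSum_apply, hinl, hinr, _root_.map_zero, add_zero, zero_add])
  exact congrArg _root_.Prod.fst h

theorem subsingleton_limit_of_injective_coprodSum [HasBinaryCoproducts C]
    (hT : ∀ c, Function.Injective (coprodSum F c c)) : Subsingleton (limit F : AddCommGrpCat) :=
  ⟨fun x y => Concrete.limit_ext F x y fun c => by
    rw [limit_π_eq_zero_of_injective_coprodSum (hT c),
      limit_π_eq_zero_of_injective_coprodSum (hT c)]⟩

theorem sections_eq_zero_of_subsingleton_limit [Subsingleton (limit F : AddCommGrpCat)]
    (s : (F ⋙ forget AddCommGrpCat).sections) (d : C) : s.val d = 0 := by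
  have hlim := isLimitOfPreserves (forget AddCommGrpCat) (limit.isLimit F)
  let z : (limit F : AddCommGrpCat) := (Types.isLimitEquivSections hlim).symm s
  have hz : limit.π F d z = s.val d := Types.isLimitEquivSections_symm_apply hlim s d
  rw [← hz, Subsingleton.elim z 0]
  exact _root_.map_zero _

theorem eq_zero_of_forall_map_eq [Subsingleton (limit F : AddCommGrpCat)] {c : C}
    (hc : ∀ d, Nonempty (c ⟶ d)) {x : F.obj c}
    (hx : ∀ d (f f' : c ⟶ d), F.map f x = F.map f' x) : x = 0 := by
  let s : (F ⋙ forget AddCommGrpCat).sections :=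
    ⟨fun d => F.map (hc d).some x, fun {d d'} h => by
      change F.map h (F.map _ x) = F.map _ x
      rw [← ConcreteCategory.comp_apply, ← F.map_comp, hx]⟩
  calc x = F.map (𝟙 c) x := by rw [F.map_id, AddCommGrpCat.id_apply]
    _ = s.val c := hx c _ _
    _ = 0 := sections_eq_zero_of_subsingleton_limit s c

theorem injective_coprodSum_of_subsingleton_limit [Subsingleton (limit F : AddCommGrpCat)]
    (hconn : ∀ c c' : C, Nonempty (c ⟶ c')) (c₁ c₂ : C) [HasBinaryCoproduct c₁ c₂] :
    Function.Injective (coprodSum F c₁ c₂) := by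
  rw [injective_iff_map_eq_zero]
  rintro ⟨a₁, a₂⟩ h
  have ha₁ : a₁ = 0 := eq_zero_of_forall_map_eq (hconn c₁) fun d =>
    map_eq_map_of_coprodSum_eq_zero h (hconn c₂ d).some
  have ha₂ : a₂ = 0 := by
    simpa [ha₁] using map_eq_neg_map_of_coprodSum_eq_zero h (hconn c₁ c₂).some (𝟙 c₂)
  rw [ha₁, ha₂, Prod.mk_zero_zero]

end Limit

end CategoryTheory.Functor

open CategoryTheory.Functor in
/-- For a strongly connected category `C` with pairwise coproducts and
`F : C ⥤ Ab`, the functor `F` is monoadditive (all maps `T : F(c₁) ⊕ F(c₂) → F(c₁ ⊔ c₂)`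
are injective) if and only if `lim F = 0`. -/
theorem monoadditive_iff_limit_eq_zero
    (C : Type) [SmallCategory C]
    (hconn : ∀ c c' : C, Nonempty (c ⟶ c'))
    [HasBinaryCoproducts C]
    (F : C ⥤ AddCommGrpCat) :
    (∀ c₁ c₂ : C, Function.Injective
        (fun p : F.obj c₁ × F.obj c₂ =>
          F.map (coprod.inl : c₁ ⟶ c₁ ⨿ c₂) p.1 + F.map (coprod.inr : c₂ ⟶ c₁ ⨿ c₂) p.2)) ↔
      Subsingleton (limit F : AddCommGrpCat) :=
  ⟨fun hT => subsingleton_limit_of_injective_coprodSum fun c => hT c c,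
    fun _ c₁ c₂ => injective_coprodSum_of_subsingleton_limit hconn c₁ c₂⟩
end

section
/- For any abelian group A, there is a short exact sequence 0 → A ⊗ ℤ/2 → ⊗̃²(A) → Λ²(A) → 0, where the left map sends the class of a to the class of a ⊗ a. -/
open TensorProduct

/-- The antisymmetric square `⊗̃²(A)`: the quotient of `A ⊗ A` by the subgroup generated by
all elements `a ⊗ b + b ⊗ a`. -/
noncomputable def antisymRel (A : Type) [AddCommGroup A] : Submodule ℤ (A ⊗[ℤ] A) :=
  Submodule.span ℤ {x | ∃ a b : A, x = a ⊗ₜ[ℤ] b + b ⊗ₜ[ℤ] a}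

noncomputable abbrev AntisymSq (A : Type) [AddCommGroup A] :=
  (A ⊗[ℤ] A) ⧸ antisymRel A

/-- The exterior square `Λ²(A)`: the quotient of `A ⊗ A` by the subgroup generated by all
elements `a ⊗ a`. -/
noncomputable def extRel (A : Type) [AddCommGroup A] : Submodule ℤ (A ⊗[ℤ] A) :=
  Submodule.span ℤ {x | ∃ a : A, x = a ⊗ₜ[ℤ] a}

noncomputable abbrev ExtSq (A : Type) [AddCommGroup A] :=
  (A ⊗[ℤ] A) ⧸ extRel A

/-!
The diagonal `a ↦ [a ⊗ a]` is additive on `⊗̃²(A)`, since there the cross terms `a ⊗ b + b ⊗ a`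
vanish, and it kills `2A`; so it induces `A ⊗ ℤ/2 → ⊗̃²(A)`, whose image is the image of the
kernel `⟨a ⊗ a⟩` of `A ⊗ A → Λ²(A)`. For injectivity, every `φ : A ⊗ ℤ/2 → ℤ/2` factors through
`⊗̃²(A)`: with `g a = φ (a ⊗ 1)`, the symmetric form `x ⊗ y ↦ g x * g y` vanishes on the
relations because `2 = 0` in `ℤ/2`, and sends `a ⊗ a` to `g a ^ 2 = g a`. These `φ` separate the
points of the `ℤ/2`-vector space `A ⊗ ℤ/2`.
-/

section ZModTensor

variable {A M : Type*} [AddCommGroup A] [AddCommGroup M] {n : ℕ}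

theorem TensorProduct.zmod_exists_tmul_one (x : A ⊗[ℤ] ZMod n) : ∃ a : A, a ⊗ₜ 1 = x := by
  induction x using TensorProduct.induction_on with
  | zero => exact ⟨0, zero_tmul _ _⟩
  | tmul a c =>
    obtain ⟨k, rfl⟩ := ZMod.intCast_surjective c
    exact ⟨k • a, by rw [smul_tmul, zsmul_one]⟩
  | add x y hx hy =>
    obtain ⟨a, rfl⟩ := hx
    obtain ⟨b, rfl⟩ := hy
    exact ⟨a + b, add_tmul a b 1⟩

theorem TensorProduct.zmod_linearMap_ext {f g : A ⊗[ℤ] ZMod n →ₗ[ℤ] M}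
    (h : ∀ a : A, f (a ⊗ₜ 1) = g (a ⊗ₜ 1)) : f = g :=
  LinearMap.ext fun x => by
    obtain ⟨a, rfl⟩ := zmod_exists_tmul_one x
    exact h a

theorem TensorProduct.zmod_nsmul_eq_zero (x : A ⊗[ℤ] ZMod n) : n • x = 0 := by
  obtain ⟨a, rfl⟩ := zmod_exists_tmul_one x
  rw [← tmul_smul, nsmul_one, ZMod.natCast_self, tmul_zero]

noncomputable def TensorProduct.liftZMod (f : A →ₗ[ℤ] M) (hf : n • f = 0) :
    A ⊗[ℤ] ZMod n →ₗ[ℤ] M :=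
  lift (ZMod.lift n ⟨zmultiplesHom _ f, by simpa using hf⟩).toIntLinearMap.flip

theorem TensorProduct.liftZMod_tmul_one (f : A →ₗ[ℤ] M) (hf : n • f = 0) (a : A) :
    liftZMod f hf (a ⊗ₜ 1) = f a := by
  have hf' : zmultiplesHom _ f (n : ℤ) = 0 := by simpa using hf
  change ZMod.lift n ⟨zmultiplesHom _ f, hf'⟩ 1 a = f a
  rw [← Int.cast_one, ZMod.lift_coe, zmultiplesHom_apply, one_smul]

end ZModTensor

theorem eq_zero_of_forall_linearMap_zmod_apply_eq_zero {p : ℕ} [Fact p.Prime] {V : Type*}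
    [AddCommGroup V] [Module (ZMod p) V] {v : V} (h : ∀ φ : V →ₗ[ℤ] ZMod p, φ v = 0) : v = 0 :=
  (Module.forall_dual_apply_eq_zero_iff (ZMod p) v).mp fun φ => h φ.toAddMonoidHom.toIntLinearMap

section SquareForm

variable {A R : Type*} [AddCommGroup A] [CommRing R]

noncomputable def tensorSquareForm (g : A →ₗ[ℤ] R) : A ⊗[ℤ] A →ₗ[ℤ] R :=
  lift ((LinearMap.mul ℤ R).compl₁₂ g g)

theorem tensorSquareForm_tmul (g : A →ₗ[ℤ] R) (a b : A) :
    tensorSquareForm g (a ⊗ₜ b) = g a * g b :=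
  rfl

end SquareForm

theorem antisymRel_le_extRel (A : Type) [AddCommGroup A] : antisymRel A ≤ extRel A := by
  rw [antisymRel, Submodule.span_le]
  rintro _ ⟨a, b, rfl⟩
  have hpolar : a ⊗ₜ[ℤ] b + b ⊗ₜ[ℤ] a = (a + b) ⊗ₜ (a + b) - a ⊗ₜ a - b ⊗ₜ b := by
    simp only [tmul_add, add_tmul]
    abel
  have hsq (c : A) : c ⊗ₜ[ℤ] c ∈ extRel A := Submodule.subset_span ⟨c, rfl⟩
  rw [SetLike.mem_coe, hpolar]
  exact sub_mem (sub_mem (hsq _) (hsq a)) (hsq b)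

namespace AntisymSq

variable {A : Type} [AddCommGroup A]

theorem mk_tmul_add_mk_tmul_swap (a b : A) :
    (Submodule.Quotient.mk (a ⊗ₜ b) + Submodule.Quotient.mk (b ⊗ₜ a) : AntisymSq A) = 0 := by
  rw [← Submodule.Quotient.mk_add, Submodule.Quotient.mk_eq_zero]
  exact Submodule.subset_span ⟨a, b, rfl⟩

variable (A) in
noncomputable def diag : A →ₗ[ℤ] AntisymSq A :=
  (AddMonoidHom.mk' (fun a => Submodule.Quotient.mk (a ⊗ₜ a)) fun a b => by
    simp only [tmul_add, add_tmul, Submodule.Quotient.mk_add]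
    linear_combination (norm := abel) mk_tmul_add_mk_tmul_swap a b).toIntLinearMap

theorem diag_apply (a : A) : diag A a = Submodule.Quotient.mk (a ⊗ₜ a) := rfl

theorem two_nsmul_diag : 2 • diag A = 0 :=
  LinearMap.ext fun a => by
    rw [LinearMap.smul_apply, two_nsmul, diag_apply, mk_tmul_add_mk_tmul_swap]
    rfl

variable (A) in
noncomputable def ofTensorZModTwo : A ⊗[ℤ] ZMod 2 →ₗ[ℤ] AntisymSq A :=
  liftZMod (diag A) two_nsmul_diag

theorem ofTensorZModTwo_tmul_one (a : A) :
    ofTensorZModTwo A (a ⊗ₜ 1) = Submodule.Quotient.mk (a ⊗ₜ a) :=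
  liftZMod_tmul_one _ _ a

theorem range_ofTensorZModTwo :
    LinearMap.range (ofTensorZModTwo A) = (extRel A).map (antisymRel A).mkQ := by
  apply le_antisymm
  · rintro _ ⟨x, rfl⟩
    obtain ⟨a, rfl⟩ := zmod_exists_tmul_one x
    rw [ofTensorZModTwo_tmul_one]
    exact Submodule.mem_map_of_mem (Submodule.subset_span ⟨a, rfl⟩)
  · rw [extRel, Submodule.map_span, Submodule.span_le]
    rintro _ ⟨_, ⟨a, rfl⟩, rfl⟩
    exact ⟨a ⊗ₜ 1, ofTensorZModTwo_tmul_one a⟩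

noncomputable def squareForm {R : Type*} [CommRing R] [CharP R 2] (g : A →ₗ[ℤ] R) :
    AntisymSq A →ₗ[ℤ] R :=
  (antisymRel A).liftQ (tensorSquareForm g) <| by
    rw [antisymRel, Submodule.span_le]
    rintro _ ⟨a, b, rfl⟩
    rw [SetLike.mem_coe, LinearMap.mem_ker, map_add, tensorSquareForm_tmul,
      tensorSquareForm_tmul, mul_comm (g b)]
    exact CharTwo.add_self_eq_zero _

theorem squareForm_mk_tmul {R : Type*} [CommRing R] [CharP R 2] (g : A →ₗ[ℤ] R) (a b : A) :
    squareForm g (Submodule.Quotient.mk (a ⊗ₜ b)) = g a * g b :=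
  rfl

theorem squareForm_comp_ofTensorZModTwo {g : A →ₗ[ℤ] ZMod 2} {φ : A ⊗[ℤ] ZMod 2 →ₗ[ℤ] ZMod 2}
    (hφ : ∀ a, φ (a ⊗ₜ 1) = g a) : squareForm g ∘ₗ ofTensorZModTwo A = φ :=
  zmod_linearMap_ext fun a => by
    have hidem : ∀ z : ZMod 2, z * z = z := by decide
    rw [LinearMap.comp_apply, ofTensorZModTwo_tmul_one, squareForm_mk_tmul, hidem, hφ]

theorem ofTensorZModTwo_injective : Function.Injective (ofTensorZModTwo A) := by
  refine (injective_iff_map_eq_zero _).mpr fun x hx => ?_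
  let _ : Module (ZMod 2) (A ⊗[ℤ] ZMod 2) := AddCommGroup.zmodModule zmod_nsmul_eq_zero
  refine eq_zero_of_forall_linearMap_zmod_apply_eq_zero (p := 2) fun φ => ?_
  have hφ : φ = squareForm (φ ∘ₗ (mk ℤ A (ZMod 2)).flip 1) ∘ₗ ofTensorZModTwo A :=
    (squareForm_comp_ofTensorZModTwo fun _ => rfl).symm
  rw [hφ, LinearMap.comp_apply, hx, map_zero]

end AntisymSq

/-- For any abelian group `A` there is a short exact sequence
`0 → A ⊗ ℤ/2 → ⊗̃²(A) → Λ²(A) → 0`, where the left map sends (the class of) `a` to the class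
of `a ⊗ a` and the right map is the natural quotient map. -/
theorem antisym_sq_ses (A : Type) [AddCommGroup A] :
    ∃ (ι : (A ⊗[ℤ] ZMod 2) →ₗ[ℤ] AntisymSq A) (π : AntisymSq A →ₗ[ℤ] ExtSq A),
      (∀ a : A, ι (a ⊗ₜ[ℤ] (1 : ZMod 2)) = Submodule.Quotient.mk (a ⊗ₜ[ℤ] a)) ∧
      (∀ x : A ⊗[ℤ] A,
        π (Submodule.Quotient.mk x) = (Submodule.Quotient.mk x : ExtSq A)) ∧
      Function.Injective ι ∧
      Function.Surjective π ∧
      LinearMap.range ι = LinearMap.ker π := by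
  have hle := antisymRel_le_extRel A
  refine ⟨AntisymSq.ofTensorZModTwo A, Submodule.factor hle, AntisymSq.ofTensorZModTwo_tmul_one,
    fun _ => rfl, AntisymSq.ofTensorZModTwo_injective, Submodule.factor_surjective hle, ?_⟩
  rw [AntisymSq.range_ofTensorZModTwo, Submodule.ker_mapQ, Submodule.comap_id]
end

section
/- Let F be a free group and R a normal subgroup of F. Then γ₂(R) ∩ γ₃(F) = [R ∩ γ₂(F), R]. -/
/-!
Modulo `N = [R ∩ γ₂F, R]`, the commutator of two elements of `R` is biadditive, alternating and
depends only on their images in `F_ab`, so it is an alternating pairing on the image `M` of `R`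
in `F_ab` with values in the abelian group `[R, R]N / N`. If `x = ∏ [uₖ, vₖ]`, the class of `x`
is the value of this pairing on `∑ uₖ ⊗ vₖ`, and it vanishes as soon as `∑ f(uₖ) g(vₖ)` is
symmetric in `f, g` for rational functionals on `M`: the elements involved span a finitely
generated, hence free, submodule of the torsion-free group `M`, whose coordinate functionals extend
to `M` because `ℚ` is an injective `ℤ`-module. For `x ∈ γ₃F` that symmetry holds: the Heisenberg
representation of the free group `F` with outer coordinates `f, g` kills `γ₃F`, and its central
coordinate at `x` is `∑ f(uₖ) g(vₖ) - g(uₖ) f(vₖ)`.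
-/

open scoped commutatorElement IsMulCommutative

section

open Finset

theorem LinearMap.IsAlt.sum_apply_eq_zero_of_free {S M N κ : Type*} [CommRing S] [AddCommGroup M]
    [Module S M] [Module.Free S M] [Module.Finite S M] [AddCommGroup N] [Module S N]
    [Fintype κ] {B : M →ₗ[S] M →ₗ[S] N} (hB : B.IsAlt) (m m' : κ → M)
    (h : ∀ f g : M →ₗ[S] S, ∑ k, f (m k) * g (m' k) = ∑ k, g (m k) * f (m' k)) :
    ∑ k, B (m k) (m' k) = 0 := by
  let b := Module.Free.chooseBasis S M
  let n : _ → _ → S := fun i j => ∑ k, b.coord i (m k) * b.coord j (m' k)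
  have expand (x y : M) : B x y = ∑ i, ∑ j, (b.coord i x * b.coord j y) • B (b i) (b j) := by
    conv_lhs => rw [← b.sum_repr x, ← b.sum_repr y]
    simp only [map_sum, map_smul, LinearMap.sum_apply, LinearMap.smul_apply, smul_sum, smul_smul,
      b.coord_apply]
    rw [sum_comm]
    simp only [mul_comm]
  calc ∑ k, B (m k) (m' k) = ∑ ij : _ × _, n ij.1 ij.2 • B (b ij.1) (b ij.2) := by
        rw [sum_congr rfl fun k _ => expand (m k) (m' k), Fintype.sum_prod_type]
        simp only [n, sum_smul]
        rw [sum_comm]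
        exact sum_congr rfl fun _ _ => sum_comm
    _ = 0 := by
      refine sum_involution (fun ij _ => ij.swap) (fun ij _ => ?_) (fun ij _ hne heq => ?_)
        (fun _ _ => mem_univ _) (fun _ _ => rfl)
      · rw [Prod.fst_swap, Prod.snd_swap, ← hB.neg, smul_neg,
          show n ij.2 ij.1 = n ij.1 ij.2 from h _ _, neg_add_cancel]
      · obtain ⟨i, j⟩ := ij
        obtain ⟨rfl, -⟩ : j = i ∧ i = j := Prod.mk.inj heq
        exact hne (by rw [hB.self_eq_zero, smul_zero])

theorem LinearMap.IsAlt.sum_apply_eq_zero_of_isTorsionFree {M N κ : Type*} [AddCommGroup M]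
    [Module.IsTorsionFree ℤ M] [AddCommGroup N] [Fintype κ] {B : M →ₗ[ℤ] M →ₗ[ℤ] N}
    (hB : B.IsAlt) (m m' : κ → M)
    (h : ∀ f g : M →ₗ[ℤ] ℚ, ∑ k, f (m k) * g (m' k) = ∑ k, g (m k) * f (m' k)) :
    ∑ k, B (m k) (m' k) = 0 := by
  let P := Submodule.span ℤ (Set.range m ∪ Set.range m')
  have : Module.Finite ℤ P :=
    Module.Finite.span_of_finite ℤ ((Set.finite_range m).union (Set.finite_range m'))
  have hP : (B.compl₁₂ P.subtype P.subtype).IsAlt := fun x => hB x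
  refine hP.sum_apply_eq_zero_of_free (fun k => ⟨m k, Submodule.subset_span (Or.inl ⟨k, rfl⟩)⟩)
    (fun k => ⟨m' k, Submodule.subset_span (Or.inr ⟨k, rfl⟩)⟩) fun f₀ g₀ => ?_
  have extend (f₀ : P →ₗ[ℤ] ℤ) : ∃ f : M →ₗ[ℤ] ℚ, ∀ x : P, f x = f₀ x := by
    obtain ⟨f, hf⟩ := (Module.Baer.of_divisible ℚ).extension_property P.subtype
      P.injective_subtype (Algebra.linearMap ℤ ℚ ∘ₗ f₀)
    exact ⟨f, fun x => LinearMap.congr_fun hf x⟩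
  obtain ⟨f, hf⟩ := extend f₀
  obtain ⟨g, hg⟩ := extend g₀
  apply Int.cast_injective (α := ℚ)
  push_cast
  simp only [← hf, ← hg]
  exact h f g

end

/-- Upper unitriangular matrices `[[1, a, c], [0, 1, b], [0, 0, 1]]` under matrix multiplication. -/
@[ext]
structure Heisenberg (S : Type*) where
  a : S
  b : S
  c : S

namespace Heisenberg

variable {S : Type*} [CommRing S]

instance : Mul (Heisenberg S) := ⟨fun x y => ⟨x.a + y.a, x.b + y.b, x.c + y.c + x.a * y.b⟩⟩
instance : One (Heisenberg S) := ⟨⟨0, 0, 0⟩⟩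
instance : Inv (Heisenberg S) := ⟨fun x => ⟨-x.a, -x.b, x.a * x.b - x.c⟩⟩

@[simp] lemma mul_a (x y : Heisenberg S) : (x * y).a = x.a + y.a := rfl
@[simp] lemma mul_b (x y : Heisenberg S) : (x * y).b = x.b + y.b := rfl
@[simp] lemma mul_c (x y : Heisenberg S) : (x * y).c = x.c + y.c + x.a * y.b := rfl
@[simp] lemma one_a : (1 : Heisenberg S).a = 0 := rfl
@[simp] lemma one_b : (1 : Heisenberg S).b = 0 := rfl
@[simp] lemma one_c : (1 : Heisenberg S).c = 0 := rfl
@[simp] lemma inv_a (x : Heisenberg S) : x⁻¹.a = -x.a := rfl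
@[simp] lemma inv_b (x : Heisenberg S) : x⁻¹.b = -x.b := rfl
@[simp] lemma inv_c (x : Heisenberg S) : x⁻¹.c = x.a * x.b - x.c := rfl

instance : Group (Heisenberg S) where
  mul_assoc x y z := by ext <;> simp <;> ring
  one_mul x := by ext <;> simp
  mul_one x := by ext <;> simp
  inv_mul_cancel x := by ext <;> simp

lemma commutatorElement_eq (x y : Heisenberg S) : ⁅x, y⁆ = ⟨0, 0, x.a * y.b - y.a * x.b⟩ := by
  ext <;> simp [commutatorElement_def]
  ring

lemma top_lowerCentralSeries_two_eq_bot :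
    (⊤ : Subgroup (Heisenberg S)).lowerCentralSeries 2 = ⊥ := by
  refine Subgroup.lowerCentralSeries_succ_eq_bot _ ?_
  rw [Subgroup.top_lowerCentralSeries_one, commutator_eq_closure, Subgroup.closure_le]
  rintro _ ⟨x, y, rfl⟩
  rw [SetLike.mem_coe, Subgroup.mem_center_iff, commutatorElement_eq]
  intro z
  ext <;> simp [add_comm]

lemma c_list_prod_commutatorElement (L : List (Heisenberg S × Heisenberg S)) :
    ((L.map fun p => ⁅p.1, p.2⁆).prod : Heisenberg S).c =
      (L.map fun p => p.1.a * p.2.b).sum - (L.map fun p => p.1.b * p.2.a).sum := by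
  induction L with
  | nil => simp
  | cons p L ih =>
    rw [List.map_cons, List.prod_cons, mul_c, ih, commutatorElement_eq]
    simp only [List.map_cons, List.sum_cons, zero_mul, add_zero]
    ring

end Heisenberg

theorem FreeGroup.sum_mul_eq_of_list_prod_commutatorElement_mem {α S : Type*} [CommRing S]
    (f g : Additive (Abelianization (FreeGroup α)) →+ S) (L : List (FreeGroup α × FreeGroup α))
    (hL : (L.map fun p => ⁅p.1, p.2⁆).prod ∈ (⊤ : Subgroup (FreeGroup α)).lowerCentralSeries 2) :
    (L.map fun p => f (.ofMul (.of p.1)) * g (.ofMul (.of p.2))).sum =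
      (L.map fun p => g (.ofMul (.of p.1)) * f (.ofMul (.of p.2))).sum := by
  let φ : FreeGroup α →* Heisenberg S :=
    FreeGroup.lift fun i => ⟨f (.ofMul (.of (.of i))), g (.ofMul (.of (.of i))), 0⟩
  have hφ (w : FreeGroup α) : (φ w).a = f (.ofMul (.of w)) ∧ (φ w).b = g (.ofMul (.of w)) := by
    induction w using FreeGroup.induction_on with
    | C1 => simp
    | of i => simp [φ]
    | inv_of i _ => simp [φ]
    | mul x y hx hy => simp [hx, hy]
  have hφL : φ (L.map fun p => ⁅p.1, p.2⁆).prod = 1 := by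
    have := Subgroup.mem_map_of_mem φ hL
    rw [Subgroup.map_lowerCentralSeries] at this
    replace : _ ∈ (⊤ : Subgroup _).lowerCentralSeries 2 :=
      Subgroup.lowerCentralSeries_mono 2 le_top this
    rwa [Heisenberg.top_lowerCentralSeries_two_eq_bot, Subgroup.mem_bot] at this
  have hc : ((L.map fun p => (φ p.1, φ p.2)).map fun p : Heisenberg S × _ => ⁅p.1, p.2⁆).prod.c =
      0 := by
    rw [← Heisenberg.one_c, ← hφL, map_list_prod, List.map_map, List.map_map]
    simp only [Function.comp_def, map_commutatorElement]
  rw [Heisenberg.c_list_prod_commutatorElement, List.map_map, List.map_map, sub_eq_zero] at hc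
  simpa only [Function.comp_def, hφ] using hc

namespace Subgroup

variable {G : Type*} [Group G]

theorem exists_list_of_mem_commutator_self {H : Subgroup G} {x : G} (hx : x ∈ ⁅H, H⁆) :
    ∃ L : List (H × H), (L.map fun p => ⁅(p.1 : G), (p.2 : G)⁆).prod = x := by
  rw [commutator_def] at hx
  induction hx using closure_induction with
  | mem _ h =>
    obtain ⟨u, hu, v, hv, rfl⟩ := h
    exact ⟨[(⟨u, hu⟩, ⟨v, hv⟩)], by simp⟩
  | one => exact ⟨[], rfl⟩
  | mul _ _ _ _ h₁ h₂ =>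
    obtain ⟨L₁, rfl⟩ := h₁
    obtain ⟨L₂, rfl⟩ := h₂
    exact ⟨L₁ ++ L₂, by simp⟩
  | inv _ _ h =>
    obtain ⟨L, rfl⟩ := h
    exact ⟨(L.map Prod.swap).reverse, by simp [List.prod_inv_reverse, Function.comp_def]⟩

variable (R : Subgroup G)

def abelianizationImage : Submodule ℤ (Additive (Abelianization G)) :=
  AddSubgroup.toIntSubmodule (Subgroup.toAddSubgroup (R.map Abelianization.of))

def toAbelianizationImage (u : R) : R.abelianizationImage :=
  ⟨.ofMul (.of u), show Abelianization.of (u : G) ∈ R.map Abelianization.of from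
    mem_map_of_mem _ u.2⟩

theorem toAbelianizationImage_surjective : Function.Surjective R.toAbelianizationImage := by
  rintro ⟨x, u, hu, hux⟩
  exact ⟨⟨u, hu⟩, Subtype.ext hux⟩

theorem toAbelianizationImage_mul (u v : R) :
    R.toAbelianizationImage (u * v) = R.toAbelianizationImage u + R.toAbelianizationImage v :=
  rfl

variable [R.Normal]

theorem commutator_le_inf_commutator : ⁅R, R⁆ ≤ R ⊓ _root_.commutator G :=
  le_inf (commutator_le_left R R) (commutator_mono le_top le_top)

def commutatorImage : Subgroup (G ⧸ ⁅R ⊓ _root_.commutator G, R⁆) :=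
  ⁅R, R⁆.map (QuotientGroup.mk' _)

instance : IsMulCommutative R.commutatorImage := by
  refine ⟨⟨?_⟩⟩
  rintro ⟨_, x, hx, rfl⟩ ⟨_, y, hy, rfl⟩
  rw [← commutatorElement_eq_one_iff_mul_comm, Subtype.ext_iff]
  exact (QuotientGroup.eq_one_iff _).2 <|
    commutator_mono (commutator_le_inf_commutator R) (commutator_le_left R R)
      (commutator_mem_commutator hx hy)

def commutatorPairing (u v : R) : Additive R.commutatorImage :=
  .ofMul ⟨QuotientGroup.mk ⁅(u : G), (v : G)⁆,
    mem_map_of_mem _ (commutator_mem_commutator u.2 v.2)⟩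

theorem commutatorPairing_mul_left (u w v : R) :
    R.commutatorPairing (u * w) v = R.commutatorPairing u v + R.commutatorPairing w v := by
  rw [add_comm]
  apply Additive.toMul.injective
  apply Subtype.ext
  have key : ⁅(u : G) * w, (v : G)⁆ =
      ⁅(w : G), (v : G)⁆ * ⁅⁅(v : G), (w : G)⁆, (u : G)⁆ * ⁅(u : G), (v : G)⁆ := by
    group
  have hmem : ⁅⁅(v : G), (w : G)⁆, (u : G)⁆ ∈ ⁅R ⊓ _root_.commutator G, R⁆ :=
    commutator_mem_commutator (commutator_le_inf_commutator R (commutator_mem_commutator v.2 w.2))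
      u.2
  simp [commutatorPairing, key, (QuotientGroup.eq_one_iff _).2 hmem]

theorem commutatorPairing_swap (u v : R) : R.commutatorPairing v u = -R.commutatorPairing u v := by
  apply Additive.toMul.injective
  apply Subtype.ext
  simp only [commutatorPairing, toMul_neg, toMul_ofMul, coe_inv, ← QuotientGroup.mk_inv,
    commutatorElement_inv]

theorem commutatorPairing_eq_zero_of_mem_commutator {u : R} (hu : (u : G) ∈ _root_.commutator G)
    (v : R) :
    R.commutatorPairing u v = 0 := by
  apply Additive.toMul.injective
  apply Subtype.ext
  exact (QuotientGroup.eq_one_iff _).2 (commutator_mem_commutator (mem_inf.2 ⟨u.2, hu⟩) v.2)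

theorem commutatorPairing_self (u : R) : R.commutatorPairing u u = 0 := by
  apply Additive.toMul.injective
  apply Subtype.ext
  simp [commutatorPairing]

theorem commutatorPairing_congr_left {u u' : R}
    (h : R.toAbelianizationImage u = R.toAbelianizationImage u') (v : R) :
    R.commutatorPairing u v = R.commutatorPairing u' v := by
  replace h : Abelianization.of (u : G) = .of (u' : G) :=
    congrArg (Additive.toMul ∘ Subtype.val) h
  have hk : ((u⁻¹ * u' : R) : G) ∈ _root_.commutator G := by
    rw [← Abelianization.ker_of, MonoidHom.mem_ker]
    simp [h]
  rw [← mul_inv_cancel_left u u', commutatorPairing_mul_left,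
    commutatorPairing_eq_zero_of_mem_commutator R hk, add_zero]

theorem commutatorPairing_congr {u u' v v' : R}
    (hu : R.toAbelianizationImage u = R.toAbelianizationImage u')
    (hv : R.toAbelianizationImage v = R.toAbelianizationImage v') :
    R.commutatorPairing u v = R.commutatorPairing u' v' := by
  rw [commutatorPairing_congr_left R hu, commutatorPairing_swap, commutatorPairing_congr_left R hv,
    ← commutatorPairing_swap]

noncomputable def commutatorPairingBilin :
    R.abelianizationImage →ₗ[ℤ] R.abelianizationImage →ₗ[ℤ] Additive R.commutatorImage :=
  let s := Function.surjInv R.toAbelianizationImage_surjective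
  have hs (m : R.abelianizationImage) : R.toAbelianizationImage (s m) = m :=
    Function.surjInv_eq _ m
  have add_left (m₁ m₂ m : R.abelianizationImage) :
      R.commutatorPairing (s (m₁ + m₂)) (s m) =
        R.commutatorPairing (s m₁) (s m) + R.commutatorPairing (s m₂) (s m) := by
    rw [← commutatorPairing_mul_left]
    exact R.commutatorPairing_congr (by rw [hs, toAbelianizationImage_mul, hs, hs]) rfl
  have add_right (m m₁ m₂ : R.abelianizationImage) :
      R.commutatorPairing (s m) (s (m₁ + m₂)) =
        R.commutatorPairing (s m) (s m₁) + R.commutatorPairing (s m) (s m₂) := by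
    rw [commutatorPairing_swap, add_left, neg_add, ← commutatorPairing_swap,
      ← commutatorPairing_swap]
  LinearMap.mk₂ ℤ (fun m m' => R.commutatorPairing (s m) (s m')) add_left
    (fun c m m' => map_zsmul (AddMonoidHom.mk' (fun m => R.commutatorPairing (s m) (s m'))
      fun m₁ m₂ => add_left m₁ m₂ m') c m) add_right
    (fun c m m' => map_zsmul (AddMonoidHom.mk' (fun m' => R.commutatorPairing (s m) (s m'))
      fun m₁ m₂ => add_right m m₁ m₂) c m')

theorem commutatorPairingBilin_apply (u v : R) :
    R.commutatorPairingBilin (R.toAbelianizationImage u) (R.toAbelianizationImage v) =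
      R.commutatorPairing u v :=
  R.commutatorPairing_congr (Function.surjInv_eq _ _) (Function.surjInv_eq _ _)

theorem commutatorPairingBilin_isAlt : R.commutatorPairingBilin.IsAlt := by
  intro m
  obtain ⟨u, rfl⟩ := R.toAbelianizationImage_surjective m
  rw [commutatorPairingBilin_apply, commutatorPairing_self]

theorem list_prod_commutatorElement_mem_of_sum_mul_comm
    [Module.IsTorsionFree ℤ (Additive (Abelianization G))] (L : List (R × R))
    (h : ∀ f g : Additive (Abelianization G) →+ ℚ,
      (L.map fun p => f (.ofMul (.of (p.1 : G))) * g (.ofMul (.of (p.2 : G)))).sum =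
        (L.map fun p => g (.ofMul (.of (p.1 : G))) * f (.ofMul (.of (p.2 : G)))).sum) :
    (L.map fun p => ⁅(p.1 : G), (p.2 : G)⁆).prod ∈ ⁅R ⊓ _root_.commutator G, R⁆ := by
  have hsum : (L.map fun p => R.commutatorPairing p.1 p.2).sum = 0 := by
    simp only [← commutatorPairingBilin_apply, ← Fin.sum_univ_fun_getElem]
    refine R.commutatorPairingBilin_isAlt.sum_apply_eq_zero_of_isTorsionFree _ _ fun f g => ?_
    have extend (f : R.abelianizationImage →ₗ[ℤ] ℚ) :
        ∃ f' : Additive (Abelianization G) →+ ℚ,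
          ∀ u : R, f' (.ofMul (.of (u : G))) = f (R.toAbelianizationImage u) := by
      obtain ⟨f', hf'⟩ := (Module.Baer.of_divisible ℚ).extension_property_addMonoidHom
        R.abelianizationImage.subtype.toAddMonoidHom Subtype.val_injective f.toAddMonoidHom
      exact ⟨f', fun u => DFunLike.congr_fun hf' (R.toAbelianizationImage u)⟩
    obtain ⟨f', hf'⟩ := extend f
    obtain ⟨g', hg'⟩ := extend g
    have := h f' g'
    simp only [hf', hg'] at this
    rwa [← Fin.sum_univ_fun_getElem, ← Fin.sum_univ_fun_getElem] at this
  have hmk : ((L.map fun p => ⁅(p.1 : G), (p.2 : G)⁆).prod : G ⧸ ⁅R ⊓ _root_.commutator G, R⁆) =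
      (Additive.toMul (L.map fun p => R.commutatorPairing p.1 p.2).sum : R.commutatorImage) := by
    rw [toMul_list_sum, SubmonoidClass.coe_list_prod, ← QuotientGroup.mk'_apply, map_list_prod]
    simp [List.map_map, Function.comp_def, commutatorPairing]
  rw [← QuotientGroup.eq_one_iff, hmk, hsum]
  rfl

end Subgroup

/-- For a free group `F` and a normal subgroup `R` of `F`,
`γ₂(R) ∩ γ₃(F) = [R ∩ γ₂(F), R]`.  Here `γ₂(R) = [R, R]`, `γ₃(F)` is the third term of the
lower central series of `F` (`lowerCentralSeries F 2` in Mathlib's indexing, which starts at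
`γ₁ = lowerCentralSeries F 0 = ⊤`). -/
theorem gamma2_inter_gamma3_eq_commutator
    (α : Type) (R : Subgroup (FreeGroup α)) [R.Normal] :
    ⁅R, R⁆ ⊓ (⊤ : Subgroup (FreeGroup α)).lowerCentralSeries 2 =
      ⁅R ⊓ (⊤ : Subgroup (FreeGroup α)).lowerCentralSeries 1, R⁆ := by
  refine le_antisymm ?_ <| le_inf (Subgroup.commutator_mono inf_le_left le_rfl)
    (Subgroup.commutator_mono inf_le_right le_top)
  rintro _ ⟨hx, hx₃⟩
  obtain ⟨L, rfl⟩ := Subgroup.exists_list_of_mem_commutator_self hx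
  have : Module.IsTorsionFree ℤ (Additive (Abelianization (FreeGroup α))) :=
    inferInstanceAs (Module.IsTorsionFree ℤ (FreeAbelianGroup α))
  refine R.list_prod_commutatorElement_mem_of_sum_mul_comm L fun f g => ?_
  have := FreeGroup.sum_mul_eq_of_list_prod_commutatorElement_mem f g
    (L.map fun p => ((p.1 : FreeGroup α), (p.2 : FreeGroup α)))
    (by simpa [List.map_map, Function.comp_def] using hx₃)
  simpa [List.map_map, Function.comp_def] using this
end

section
/- Let F be a free group with relation ideal 𝔯 of a normal subgroup R, and let x, y ∈ R ∩ γ₂(F) and m ≥ 1 with x^m = r_x s_x and y^m = r_y s_y, where r_x, r_y ∈ R ∩ γ₃(F) and s_x, s_y ∈ γ₂(R). Then the element w := [x, y]^m [x, s_y]^{−1} [y, s_x] satisfies w − 1 ∈ 𝔯𝔣³, i.e., w ∈ F(3, R) := F ∩ (1 + 𝔯𝔣³). -/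
/-- The augmentation map of the integral group ring `ℤ[F]`. -/
noncomputable def aug (F : Type) [Group F] : MonoidAlgebra ℤ F →ₐ[ℤ] ℤ :=
  MonoidAlgebra.lift ℤ ℤ F 1

/-- The augmentation ideal `𝔣` of `ℤ[F]`, as a `ℤ`-submodule of `ℤ[F]`. -/
noncomputable def fI (F : Type) [Group F] : Submodule ℤ (MonoidAlgebra ℤ F) :=
  Submodule.restrictScalars ℤ (RingHom.ker (aug F).toRingHom)

/-- The relation ideal `𝔯 = 𝔯ℤ[F]` of a (normal) subgroup `R ≤ F`: the two-sided ideal of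
`ℤ[F]` generated by `{r - 1 : r ∈ R}` (for `R` normal this is the span of the elements
`(r - 1)·g`), as a `ℤ`-submodule of `ℤ[F]`. -/
noncomputable def rI {F : Type} [Group F] (R : Subgroup F) :
    Submodule ℤ (MonoidAlgebra ℤ F) :=
  Submodule.restrictScalars ℤ (Ideal.span
    {x | ∃ r ∈ R, ∃ g : F, x = (MonoidAlgebra.of ℤ F r - 1) * MonoidAlgebra.of ℤ F g})

/-!
Write `ε g = g - 1`. From `ε (g h) = ε g + ε h + ε g · ε h`, the map `ε` is additive modulo
`𝔯𝔣ⁿ⁺¹` on the Fox subgroup `F(n, R)`, and `ε (a⁻¹b⁻¹ab) = a⁻¹b⁻¹ (ε a · ε b - ε b · ε a)`.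
All three factors of `w` lie in `F(2, R)`, so modulo `𝔯𝔣³`
`ε w ≡ m · ε [x, y] - ε [x, s_y] + ε [y, s_x]`.
Since `r_x, r_y ∈ γ₃`, `m · ε y ≡ ε (y ^ m) ≡ ε s_y` modulo `𝔣³`, and `ε s · ε a ∈ 𝔯𝔣 · 𝔣²`
for `s ∈ γ₂(R)`; so each commutator term reduces to `g · ε a · ε s` with `ε a · ε s ∈ 𝔣³`.
The coefficients `g` all agree with `x⁻¹y⁻¹` modulo `R` on the left, which changes the terms
only by elements of `𝔯𝔣³`, and then the three terms cancel.
-/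

open MonoidAlgebra

section SubmoduleProducts

variable {S A : Type*} [CommRing S] [Ring A] [Algebra S A]

lemma Submodule.mul_mem_of_top_mul_le {P : Submodule S A} (hP : ⊤ * P ≤ P) (c : A) {a : A}
    (ha : a ∈ P) : c * a ∈ P :=
  hP (Submodule.mul_mem_mul Submodule.mem_top ha)

lemma Submodule.top_mul_mul_le {P : Submodule S A} (hP : ⊤ * P ≤ P) (Q : Submodule S A) :
    ⊤ * (P * Q) ≤ P * Q := by
  rw [← mul_assoc]
  exact mul_le_mul_left hP Q

lemma SModEq.mul_left_of_mem {P Q : Submodule S A} {a b c : A} (hc : c ∈ P)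
    (h : a ≡ b [SMOD Q]) : c * a ≡ c * b [SMOD P * Q] := by
  rw [SModEq.sub_mem, ← mul_sub]
  exact Submodule.mul_mem_mul hc (SModEq.sub_mem.1 h)

end SubmoduleProducts

section GroupRing

variable {G : Type} [Group G]

noncomputable def ofSubOne (g : G) : MonoidAlgebra ℤ G := of ℤ G g - 1

lemma ofSubOne_one : ofSubOne (1 : G) = 0 := by
  rw [ofSubOne, map_one, sub_self]

lemma ofSubOne_mul (a b : G) :
    ofSubOne (a * b) = ofSubOne a + ofSubOne b + ofSubOne a * ofSubOne b := by
  simp only [ofSubOne, map_mul]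
  noncomm_ring

lemma ofSubOne_mul' (a b : G) : ofSubOne (a * b) = ofSubOne a + of ℤ G a * ofSubOne b := by
  simp only [ofSubOne, map_mul]
  noncomm_ring

lemma ofSubOne_inv (g : G) : ofSubOne g⁻¹ = -(of ℤ G g⁻¹ * ofSubOne g) := by
  simp only [ofSubOne, mul_sub, mul_one, ← map_mul, inv_mul_cancel, map_one]
  noncomm_ring

lemma ofSubOne_inv_mul_inv_mul_mul (a b : G) :
    ofSubOne (a⁻¹ * b⁻¹ * a * b) =
      of ℤ G (a⁻¹ * b⁻¹) * (ofSubOne a * ofSubOne b - ofSubOne b * ofSubOne a) := by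
  have hab : a⁻¹ * b⁻¹ * a * b = (a⁻¹ * b⁻¹) * (a * b) := by group
  have hba : (a⁻¹ * b⁻¹) * (b * a) = 1 := by group
  have hcomm : ofSubOne a * ofSubOne b - ofSubOne b * ofSubOne a =
      of ℤ G (a * b) - of ℤ G (b * a) := by
    simp only [ofSubOne, map_mul]
    noncomm_ring
  rw [hcomm, mul_sub, ← map_mul, ← map_mul, hba, ← hab, map_one, ofSubOne]

lemma of_mul_ofSubOne_inv_mul (a b : G) : of ℤ G a * ofSubOne (a⁻¹ * b) = of ℤ G b - of ℤ G a := by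
  rw [ofSubOne, mul_sub, mul_one, ← map_mul, mul_inv_cancel_left]

lemma ofSubOne_mem_fI (g : G) : ofSubOne g ∈ fI G := by
  change aug G (ofSubOne g) = 0
  simp [ofSubOne, aug]

lemma top_mul_fI_le : ⊤ * fI G ≤ fI G :=
  Submodule.mul_le.2 fun a _ b hb => by
    change aug G (a * b) = 0
    rw [map_mul, show aug G b = 0 from hb, mul_zero]

lemma fI_mul_top_le : fI G * ⊤ ≤ fI G :=
  Submodule.mul_le.2 fun a ha b _ => by
    change aug G (a * b) = 0
    rw [map_mul, show aug G a = 0 from ha, zero_mul]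

lemma top_mul_fI_pow_succ_le (n : ℕ) : ⊤ * fI G ^ (n + 1) ≤ fI G ^ (n + 1) := by
  rw [pow_succ']
  exact Submodule.top_mul_mul_le (top_mul_fI_le (G := G)) _

lemma fI_pow_succ_mul_fI_le (n : ℕ) : fI G ^ (n + 1) * fI G ≤ fI G ^ (n + 1) := by
  rw [pow_succ, mul_assoc]
  exact mul_le_mul_right ((mul_le_mul_right le_top (fI G)).trans fI_mul_top_le) (fI G ^ n)

lemma top_mul_rI_le (R : Subgroup G) : ⊤ * rI R ≤ rI R :=
  Submodule.mul_le.2 fun c _ _ ha => (Ideal.span _).mul_mem_left c ha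

lemma ofSubOne_mem_rI {R : Subgroup G} {r : G} (hr : r ∈ R) : ofSubOne r ∈ rI R := by
  have : ofSubOne r = (of ℤ G r - 1) * of ℤ G 1 := by rw [map_one, mul_one, ofSubOne]
  rw [this]
  exact Ideal.subset_span ⟨r, hr, 1, rfl⟩

lemma rI_mul_fI_pow_mul_fI (R : Subgroup G) (n : ℕ) :
    rI R * fI G ^ n * fI G = rI R * fI G ^ (n + 1) := by
  rw [mul_assoc, pow_succ]

lemma ofSubOne_mem_of_mem_commutator {H K : Subgroup G} {P : Submodule ℤ (MonoidAlgebra ℤ G)}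
    (hP : ⊤ * P ≤ P)
    (hHK : ∀ h ∈ H, ∀ k ∈ K, ofSubOne h * ofSubOne k - ofSubOne k * ofSubOne h ∈ P)
    {g : G} (hg : g ∈ ⁅H, K⁆) : ofSubOne g ∈ P := by
  induction hg using Subgroup.closure_induction with
  | mem _ hg =>
    obtain ⟨h, hh, k, hk, rfl⟩ := hg
    have hcomm : h * k * h⁻¹ * k⁻¹ = h⁻¹⁻¹ * k⁻¹⁻¹ * h⁻¹ * k⁻¹ := by rw [inv_inv, inv_inv]
    rw [commutatorElement_def, hcomm, ofSubOne_inv_mul_inv_mul_mul]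
    exact Submodule.mul_mem_of_top_mul_le hP _ (hHK _ (inv_mem hh) _ (inv_mem hk))
  | one => rw [ofSubOne_one]; exact zero_mem P
  | mul a b _ _ ha hb =>
    rw [ofSubOne_mul']
    exact add_mem ha (Submodule.mul_mem_of_top_mul_le hP _ hb)
  | inv a _ ha =>
    rw [ofSubOne_inv]
    exact neg_mem (Submodule.mul_mem_of_top_mul_le hP _ ha)

lemma ofSubOne_mem_fI_pow_of_mem_lowerCentralSeries {n : ℕ} {g : G}
    (hg : g ∈ (⊤ : Subgroup G).lowerCentralSeries n) : ofSubOne g ∈ fI G ^ (n + 1) := by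
  induction n generalizing g with
  | zero => rw [pow_one]; exact ofSubOne_mem_fI g
  | succ n ih =>
    refine ofSubOne_mem_of_mem_commutator (top_mul_fI_pow_succ_le (n + 1)) (fun h hh k _ => ?_) hg
    refine sub_mem ?_ ?_
    · rw [pow_succ]; exact Submodule.mul_mem_mul (ih hh) (ofSubOne_mem_fI k)
    · rw [pow_succ']; exact Submodule.mul_mem_mul (ofSubOne_mem_fI k) (ih hh)

lemma ofSubOne_mem_rI_mul_fI_of_mem_commutator {R : Subgroup G} {s : G} (hs : s ∈ ⁅R, R⁆) :
    ofSubOne s ∈ rI R * fI G := by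
  refine ofSubOne_mem_of_mem_commutator (Submodule.top_mul_mul_le (top_mul_rI_le R) _)
    (fun h hh k hk => sub_mem ?_ ?_) hs
  · exact Submodule.mul_mem_mul (ofSubOne_mem_rI hh) (ofSubOne_mem_fI k)
  · exact Submodule.mul_mem_mul (ofSubOne_mem_rI hk) (ofSubOne_mem_fI h)

lemma ofSubOne_mul_smodEq {I J : Submodule ℤ (MonoidAlgebra ℤ G)} (hIJ : I * fI G ≤ J) {a : G}
    (ha : ofSubOne a ∈ I) (b : G) : ofSubOne (a * b) ≡ ofSubOne a + ofSubOne b [SMOD J] := by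
  rw [SModEq.sub_mem, ofSubOne_mul, add_sub_cancel_left]
  exact hIJ (Submodule.mul_mem_mul ha (ofSubOne_mem_fI b))

lemma ofSubOne_inv_smodEq {I J : Submodule ℤ (MonoidAlgebra ℤ G)} (hIJ : I * fI G ≤ J) {a : G}
    (ha : ofSubOne a ∈ I) : ofSubOne a⁻¹ ≡ -ofSubOne a [SMOD J] := by
  have h := ofSubOne_mul_smodEq hIJ ha a⁻¹
  rw [mul_inv_cancel, ofSubOne_one] at h
  simpa using (h.symm.sub (SModEq.refl (ofSubOne a)))

lemma ofSubOne_pow_smodEq {H : Subgroup G} {I J : Submodule ℤ (MonoidAlgebra ℤ G)}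
    (hH : ∀ g ∈ H, ofSubOne g ∈ I) (hIJ : I * fI G ≤ J) {a : G} (ha : a ∈ H) (k : ℕ) :
    ofSubOne (a ^ k) ≡ k • ofSubOne a [SMOD J] := by
  induction k with
  | zero => rw [pow_zero, zero_smul, ofSubOne_one]
  | succ k ih =>
    rw [pow_succ, succ_nsmul]
    exact (ofSubOne_mul_smodEq hIJ (hH _ (pow_mem ha k)) a).trans (ih.add SModEq.rfl)

def foxSubgroup (R : Subgroup G) (n : ℕ) : Subgroup G where
  carrier := {g | ofSubOne g ∈ rI R * fI G ^ n}
  one_mem' := by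
    rw [Set.mem_ofPred_eq, ofSubOne_one]
    exact zero_mem _
  mul_mem' {a b} ha hb := by
    rw [Set.mem_ofPred_eq, ofSubOne_mul']
    exact add_mem ha
      (Submodule.mul_mem_of_top_mul_le (Submodule.top_mul_mul_le (top_mul_rI_le R) _) _ hb)
  inv_mem' {a} ha := by
    rw [Set.mem_ofPred_eq, ofSubOne_inv]
    exact neg_mem
      (Submodule.mul_mem_of_top_mul_le (Submodule.top_mul_mul_le (top_mul_rI_le R) _) _ ha)

lemma mem_foxSubgroup {R : Subgroup G} {n : ℕ} {g : G} :
    g ∈ foxSubgroup R n ↔ ofSubOne g ∈ rI R * fI G ^ n :=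
  Iff.rfl

lemma mem_inf_lowerCentralSeries_one_of_mem_commutator {R : Subgroup G} {s : G}
    (hs : s ∈ ⁅R, R⁆) : s ∈ R ⊓ (⊤ : Subgroup G).lowerCentralSeries 1 := by
  refine ⟨R.commutator_le_self hs, ?_⟩
  rw [Subgroup.top_lowerCentralSeries_one, commutator_def]
  exact Subgroup.commutator_mono le_top le_top hs

lemma inv_mul_inv_mul_mul_mem_foxSubgroup_two {R : Subgroup G} {a b : G}
    (ha : a ∈ R ⊓ (⊤ : Subgroup G).lowerCentralSeries 1)
    (hb : b ∈ R ⊓ (⊤ : Subgroup G).lowerCentralSeries 1) :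
    a⁻¹ * b⁻¹ * a * b ∈ foxSubgroup R 2 := by
  rw [mem_foxSubgroup, ofSubOne_inv_mul_inv_mul_mul]
  refine Submodule.mul_mem_of_top_mul_le (Submodule.top_mul_mul_le (top_mul_rI_le R) _) _
    (sub_mem ?_ ?_)
  · exact Submodule.mul_mem_mul (ofSubOne_mem_rI ha.1)
      (ofSubOne_mem_fI_pow_of_mem_lowerCentralSeries hb.2)
  · exact Submodule.mul_mem_mul (ofSubOne_mem_rI hb.1)
      (ofSubOne_mem_fI_pow_of_mem_lowerCentralSeries ha.2)

lemma nsmul_ofSubOne_smodEq_of_pow_eq_mul {m : ℕ} {y r s : G}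
    (hy : y ∈ (⊤ : Subgroup G).lowerCentralSeries 1)
    (hr : r ∈ (⊤ : Subgroup G).lowerCentralSeries 2) (hym : y ^ m = r * s) :
    m • ofSubOne y ≡ ofSubOne s [SMOD fI G ^ 3] := by
  have hr3 : ofSubOne r ∈ fI G ^ 3 := ofSubOne_mem_fI_pow_of_mem_lowerCentralSeries hr
  calc m • ofSubOne y
      ≡ ofSubOne (y ^ m) [SMOD fI G ^ 3] :=
        (ofSubOne_pow_smodEq (fun _ => ofSubOne_mem_fI_pow_of_mem_lowerCentralSeries)
          (pow_succ (fI G) 2).ge hy m).symm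
    _ ≡ ofSubOne r + ofSubOne s [SMOD fI G ^ 3] := by
        rw [hym]; exact ofSubOne_mul_smodEq (fI_pow_succ_mul_fI_le 2) hr3 s
    _ ≡ 0 + ofSubOne s [SMOD fI G ^ 3] := (SModEq.zero.2 hr3).add SModEq.rfl
    _ = ofSubOne s := zero_add _

lemma ofSubOne_inv_mul_inv_mul_mul_pow_smodEq {R : Subgroup G} {m : ℕ} {x y rx ry sx sy : G}
    (hx : x ∈ R ⊓ (⊤ : Subgroup G).lowerCentralSeries 1)
    (hy : y ∈ R ⊓ (⊤ : Subgroup G).lowerCentralSeries 1)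
    (hrx : rx ∈ (⊤ : Subgroup G).lowerCentralSeries 2)
    (hry : ry ∈ (⊤ : Subgroup G).lowerCentralSeries 2)
    (hxm : x ^ m = rx * sx) (hym : y ^ m = ry * sy) :
    ofSubOne ((x⁻¹ * y⁻¹ * x * y) ^ m) ≡
      of ℤ G (x⁻¹ * y⁻¹) * (ofSubOne x * ofSubOne sy - ofSubOne y * ofSubOne sx)
      [SMOD rI R * fI G ^ 3] := by
  have hxy := (SModEq.mul_left_of_mem (ofSubOne_mem_rI hx.1)
    (nsmul_ofSubOne_smodEq_of_pow_eq_mul hy.2 hry hym)).sub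
    (SModEq.mul_left_of_mem (ofSubOne_mem_rI hy.1)
      (nsmul_ofSubOne_smodEq_of_pow_eq_mul hx.2 hrx hxm))
  calc ofSubOne ((x⁻¹ * y⁻¹ * x * y) ^ m)
      ≡ m • ofSubOne (x⁻¹ * y⁻¹ * x * y) [SMOD rI R * fI G ^ 3] :=
        ofSubOne_pow_smodEq (fun _ => mem_foxSubgroup.1) (rI_mul_fI_pow_mul_fI R 2).le
          (inv_mul_inv_mul_mul_mem_foxSubgroup_two hx hy) m
    _ = of ℤ G (x⁻¹ * y⁻¹) *
          (ofSubOne x * (m • ofSubOne y) - ofSubOne y * (m • ofSubOne x)) := by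
        rw [ofSubOne_inv_mul_inv_mul_mul, mul_smul_comm, mul_smul_comm, ← smul_sub,
          mul_smul_comm]
    _ ≡ of ℤ G (x⁻¹ * y⁻¹) * (ofSubOne x * ofSubOne sy - ofSubOne y * ofSubOne sx)
          [SMOD rI R * fI G ^ 3] :=
        (SModEq.mul_left_of_mem Submodule.mem_top hxy).mono
          (Submodule.top_mul_mul_le (top_mul_rI_le R) _)

lemma of_mul_smodEq_of_inv_mul_mem {R : Subgroup G} {Q : Submodule ℤ (MonoidAlgebra ℤ G)}
    {a b : G} (hab : a⁻¹ * b ∈ R) {z : MonoidAlgebra ℤ G} (hz : z ∈ Q) :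
    of ℤ G a * z ≡ of ℤ G b * z [SMOD rI R * Q] := by
  refine (SModEq.sub_mem.2 ?_).symm
  rw [← sub_mul, ← of_mul_ofSubOne_inv_mul, mul_assoc]
  exact Submodule.mul_mem_of_top_mul_le (Submodule.top_mul_mul_le (top_mul_rI_le R) Q) _
    (Submodule.mul_mem_mul (ofSubOne_mem_rI hab) hz)

lemma ofSubOne_inv_mul_inv_mul_mul_smodEq_of_mem_commutator {R : Subgroup G} {a s b : G}
    (ha : a ∈ R ⊓ (⊤ : Subgroup G).lowerCentralSeries 1) (hs : s ∈ ⁅R, R⁆) (hb : a * b ∈ R) :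
    ofSubOne (a⁻¹ * s⁻¹ * a * s) ≡ of ℤ G b * (ofSubOne a * ofSubOne s)
      [SMOD rI R * fI G ^ 3] := by
  have hP := Submodule.top_mul_mul_le (top_mul_rI_le R) (fI G ^ 3)
  have ha2 := ofSubOne_mem_fI_pow_of_mem_lowerCentralSeries ha.2
  have hsa : ofSubOne s * ofSubOne a ∈ rI R * fI G ^ 3 := by
    rw [pow_succ', ← mul_assoc]
    exact Submodule.mul_mem_mul (ofSubOne_mem_rI_mul_fI_of_mem_commutator hs) ha2
  have has : ofSubOne a * ofSubOne s ∈ fI G ^ 3 := by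
    rw [pow_succ]
    exact Submodule.mul_mem_mul ha2 (ofSubOne_mem_fI s)
  have hsab : (a⁻¹ * s⁻¹)⁻¹ * b ∈ R := by
    simpa [mul_assoc] using mul_mem (R.commutator_le_self hs) hb
  calc ofSubOne (a⁻¹ * s⁻¹ * a * s)
      ≡ of ℤ G (a⁻¹ * s⁻¹) * (ofSubOne a * ofSubOne s) [SMOD rI R * fI G ^ 3] := by
        rw [SModEq.sub_mem, ofSubOne_inv_mul_inv_mul_mul, ← mul_sub, sub_sub_cancel_left, mul_neg]
        exact neg_mem (Submodule.mul_mem_of_top_mul_le hP _ hsa)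
    _ ≡ of ℤ G b * (ofSubOne a * ofSubOne s) [SMOD rI R * fI G ^ 3] :=
        of_mul_smodEq_of_inv_mul_mem hsab has

end GroupRing

theorem elem_of_third_fox_subgroup_general
    (α : Type) (R : Subgroup (FreeGroup α))
    (m : ℕ) (x y rx ry sx sy : FreeGroup α)
    (hx : x ∈ R ⊓ Subgroup.lowerCentralSeries (⊤ : Subgroup (FreeGroup α)) 1)
    (hy : y ∈ R ⊓ Subgroup.lowerCentralSeries (⊤ : Subgroup (FreeGroup α)) 1)
    (hrx : rx ∈ R ⊓ Subgroup.lowerCentralSeries (⊤ : Subgroup (FreeGroup α)) 2)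
    (hry : ry ∈ R ⊓ Subgroup.lowerCentralSeries (⊤ : Subgroup (FreeGroup α)) 2)
    (hsx : sx ∈ ⁅R, R⁆) (hsy : sy ∈ ⁅R, R⁆)
    (hxm : x ^ m = rx * sx) (hym : y ^ m = ry * sy) :
    MonoidAlgebra.of ℤ (FreeGroup α)
        ((x⁻¹ * y⁻¹ * x * y) ^ m * (x⁻¹ * sy⁻¹ * x * sy)⁻¹ * (y⁻¹ * sx⁻¹ * y * sx)) - 1 ∈
      rI R * fI (FreeGroup α) ^ 3 := by
  have hC := pow_mem (inv_mul_inv_mul_mul_mem_foxSubgroup_two hx hy) m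
  have hD := inv_mul_inv_mul_mul_mem_foxSubgroup_two hx
    (mem_inf_lowerCentralSeries_one_of_mem_commutator hsy)
  have hN := (rI_mul_fI_pow_mul_fI R 2).le
  have hxy : x * (x⁻¹ * y⁻¹) ∈ R := by simpa using R.inv_mem hy.1
  have hyx : y * (x⁻¹ * y⁻¹) ∈ R :=
    R.mul_mem hy.1 (R.mul_mem (R.inv_mem hx.1) (R.inv_mem hy.1))
  set u := of ℤ (FreeGroup α) (x⁻¹ * y⁻¹)
  refine SModEq.zero.1 ?_
  calc ofSubOne ((x⁻¹ * y⁻¹ * x * y) ^ m * (x⁻¹ * sy⁻¹ * x * sy)⁻¹ * (y⁻¹ * sx⁻¹ * y * sx))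
      ≡ ofSubOne ((x⁻¹ * y⁻¹ * x * y) ^ m) + ofSubOne (x⁻¹ * sy⁻¹ * x * sy)⁻¹
          + ofSubOne (y⁻¹ * sx⁻¹ * y * sx) [SMOD rI R * fI (FreeGroup α) ^ 3] :=
        (ofSubOne_mul_smodEq hN (mul_mem hC (inv_mem hD)) _).trans
          ((ofSubOne_mul_smodEq hN hC _).add SModEq.rfl)
    _ ≡ u * (ofSubOne x * ofSubOne sy - ofSubOne y * ofSubOne sx)
          + -(u * (ofSubOne x * ofSubOne sy)) + u * (ofSubOne y * ofSubOne sx)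
          [SMOD rI R * fI (FreeGroup α) ^ 3] :=
        ((ofSubOne_inv_mul_inv_mul_mul_pow_smodEq hx hy hrx.2 hry.2 hxm hym).add
          ((ofSubOne_inv_smodEq hN hD).trans
            (ofSubOne_inv_mul_inv_mul_mul_smodEq_of_mem_commutator hx hsy hxy).neg)).add
          (ofSubOne_inv_mul_inv_mul_mul_smodEq_of_mem_commutator hy hsx hyx)
    _ = 0 := by noncomm_ring

/-- Let `F` be free, `R` normal in `F`, `x, y ∈ R ∩ γ₂(F)`, `m ≥ 1`, with
`x^m = r_x s_x`, `y^m = r_y s_y`, where `r_x, r_y ∈ R ∩ γ₃(F)` and `s_x, s_y ∈ γ₂(R)`.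
Then `w = [x,y]^m [x,s_y]⁻¹ [y,s_x]` (with `[a,b] = a⁻¹b⁻¹ab`) satisfies
`w - 1 ∈ 𝔯𝔣³`, i.e. `w ∈ F(3, R) = F ∩ (1 + 𝔯𝔣³)`. -/
theorem elem_of_third_fox_subgroup
    (α : Type) (R : Subgroup (FreeGroup α)) [R.Normal]
    (m : ℕ) (hm : 1 ≤ m) (x y rx ry sx sy : FreeGroup α)
    (hx : x ∈ R ⊓ Subgroup.lowerCentralSeries (⊤ : Subgroup (FreeGroup α)) 1)
    (hy : y ∈ R ⊓ Subgroup.lowerCentralSeries (⊤ : Subgroup (FreeGroup α)) 1)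
    (hrx : rx ∈ R ⊓ Subgroup.lowerCentralSeries (⊤ : Subgroup (FreeGroup α)) 2)
    (hry : ry ∈ R ⊓ Subgroup.lowerCentralSeries (⊤ : Subgroup (FreeGroup α)) 2)
    (hsx : sx ∈ ⁅R, R⁆) (hsy : sy ∈ ⁅R, R⁆)
    (hxm : x ^ m = rx * sx) (hym : y ^ m = ry * sy) :
    MonoidAlgebra.of ℤ (FreeGroup α)
        ((x⁻¹ * y⁻¹ * x * y) ^ m * (x⁻¹ * sy⁻¹ * x * sy)⁻¹ * (y⁻¹ * sx⁻¹ * y * sx)) - 1 ∈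
      rI R * fI (FreeGroup α) ^ 3 :=
  elem_of_third_fox_subgroup_general α R m x y rx ry sx sy hx hy hrx hry hsx hsy hxm hym
end
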